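/- arXiv:1908.03045 — 2 statements merged into one kernel-verified Lean document; each statement's English description precedes it below -/
import Mathlib

section
/- A finite point set 𝒱 ⊆ {0,1,…,k−1}^n is extremal if and only if the iterated downshift D_{π(n), π(n−1), …, π(1)}(𝒱) is the same set for every permutation π of [n]. -/
open MvPolynomial

/-- Monomials of `𝔽[x_1,…,x_n]` identified with their exponent vectors. -/
abbrev Mon (n : ℕ) := Fin n →₀ ℕ

/-- A linear order on monomials is a term order if `1` (i.e. the zero exponent
vector) is minimal and the order is compatible with multiplication by monomials. -/
def IsTermOrder {n : ℕ} (lin : LinearOrder (Mon n)) : Prop :=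
  (∀ u : Mon n, lin.le 0 u) ∧
    ∀ u v w : Mon n, lin.le u v → lin.le (u + w) (v + w)

/-- The strict lexicographic comparison of exponent vectors induced by the variable
ordering `x_{σ 0} ≻ x_{σ 1} ≻ ⋯ ≻ x_{σ (n-1)}`. -/
def lexLt {n : ℕ} (σ : Equiv.Perm (Fin n)) (u v : Mon n) : Prop :=
  ∃ j : Fin n, u (σ j) < v (σ j) ∧ ∀ i : Fin n, i < j → u (σ i) = v (σ i)

/-- `lin` is the lexicographic term order induced by the variable ordering
`x_{σ 0} ≻ x_{σ 1} ≻ ⋯ ≻ x_{σ (n-1)}`. -/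
def IsLexOrder {n : ℕ} (σ : Equiv.Perm (Fin n)) (lin : LinearOrder (Mon n)) : Prop :=
  ∀ u v : Mon n, lin.lt u v ↔ lexLt σ u v

/-- `m` is the leading monomial of `f` with respect to the monomial order `lin`. -/
def IsLeadMon {n : ℕ} {F : Type*} [CommSemiring F] (lin : LinearOrder (Mon n))
    (f : MvPolynomial (Fin n) F) (m : Mon n) : Prop :=
  m ∈ f.support ∧ ∀ m' ∈ f.support, lin.le m' m

/-- The set of standard monomials of an ideal `I` with respect to the monomial
order `lin`: monomials that are not the leading monomial of any nonzero `f ∈ I`. -/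
def stdMon {n : ℕ} {F : Type*} [CommSemiring F] (lin : LinearOrder (Mon n))
    (I : Ideal (MvPolynomial (Fin n) F)) : Set (Mon n) :=
  { m | ¬ ∃ f ∈ I, f ≠ 0 ∧ IsLeadMon lin f m }

/-- The vanishing ideal of a point set `V ⊆ F^n`. -/
def vanishIdeal {n : ℕ} {F : Type*} [CommRing F] (V : Set (Fin n → F)) :
    Ideal (MvPolynomial (Fin n) F) where
  carrier := { f | ∀ v ∈ V, MvPolynomial.eval v f = 0 }
  add_mem' := by
    intro a b ha hb v hv
    simp [map_add, ha v hv, hb v hv]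
  zero_mem' := by intro v hv; simp
  smul_mem' := by
    intro c f hf v hv
    simp [smul_eq_mul, hf v hv]

/-- A finite point set (in `{0,…,k-1}^n`, over any field) is extremal if its vanishing
ideal has the same standard monomials for every lexicographic term order. -/
def IsExtremal {n : ℕ} {F : Type*} [CommRing F] (V : Set (Fin n → F)) : Prop :=
  ∀ (σ₁ σ₂ : Equiv.Perm (Fin n)) (lin₁ lin₂ : LinearOrder (Mon n)),
    IsLexOrder σ₁ lin₁ → IsLexOrder σ₂ lin₂ →
      stdMon lin₁ (vanishIdeal V) = stdMon lin₂ (vanishIdeal V)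

/-- Embedding of a point of `{0,…,k-1}^n` into `F^n`. -/
def toField {n k : ℕ} (F : Type*) [Field F] (w : Fin n → Fin k) : Fin n → F :=
  fun i => ((w i : ℕ) : F)

/-- Identification of a point of `{0,…,k-1}^n` with an exponent vector in `ℕ^n`. -/
noncomputable def toExp {n k : ℕ} (w : Fin n → Fin k) : Mon n :=
  Finsupp.equivFunOnFinite.symm fun i => (w i : ℕ)

/-- The downshift `D_i(V)` of `V ⊆ {0,…,k-1}^n` at coordinate `i`: its `i`-section at
each choice of the other coordinates is `{0,1,…,m-1}` where `m` is the size of the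
corresponding `i`-section of `V`. -/
def downshift {n k : ℕ} (V : Finset (Fin n → Fin k)) (i : Fin n) :
    Finset (Fin n → Fin k) :=
  Finset.univ.filter fun w =>
    (w i : ℕ) < (Finset.univ.filter fun α : Fin k => Function.update w i α ∈ V).card

/-- The iterated downshift `D_{σ(n-1)}(D_{σ(n-2)}(⋯(D_{σ 0}(V))))`,
i.e. downshifts are applied at coordinates `σ 0, σ 1, …, σ (n-1)` in this order. -/
def iterDownshift {n k : ℕ} (σ : Equiv.Perm (Fin n)) (V : Finset (Fin n → Fin k)) :
    Finset (Fin n → Fin k) :=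
  (List.ofFn fun j : Fin n => σ j).foldl downshift V

/-- A polynomial is degree dominated (with dominating term `x^w`) if it equals
`x^w + Σ αᵢ x^{vᵢ}` where each `x^{vᵢ}` divides `x^w`. -/
def IsDegDominated {n : ℕ} {F : Type*} [CommSemiring F]
    (f : MvPolynomial (Fin n) F) : Prop :=
  ∃ w : Mon n, MvPolynomial.coeff w f = 1 ∧ ∀ v ∈ f.support, v ≤ w

/-- `G` is a Gröbner basis of `I` with respect to the monomial order `lin`:
`G ⊆ I` and for every nonzero `f ∈ I` some `g ∈ G` has leading monomial dividing
the leading monomial of `f` (divisibility of monomials being `≤` of exponents). -/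
def IsGroebner {n : ℕ} {F : Type*} [CommSemiring F] (lin : LinearOrder (Mon n))
    (G : Finset (MvPolynomial (Fin n) F)) (I : Ideal (MvPolynomial (Fin n) F)) : Prop :=
  (∀ g ∈ G, g ∈ I) ∧
    ∀ f ∈ I, f ≠ 0 → ∀ m : Mon n, IsLeadMon lin f m →
      ∃ g ∈ G, ∃ mg : Mon n, IsLeadMon lin g mg ∧ mg ≤ m

/-- `G` is a universal Gröbner basis of `I` if it is a Gröbner basis for every term order. -/
def IsUnivGroebner {n : ℕ} {F : Type*} [CommSemiring F]
    (G : Finset (MvPolynomial (Fin n) F)) (I : Ideal (MvPolynomial (Fin n) F)) : Prop :=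
  ∀ lin : LinearOrder (Mon n), IsTermOrder lin → IsGroebner lin G I

/-- A term order is an elimination order with respect to `x_i` if `x_i` is greater
than every monomial not involving `x_i`. -/
def IsElimOrder {n : ℕ} (lin : LinearOrder (Mon n)) (i : Fin n) : Prop :=
  IsTermOrder lin ∧ ∀ m : Mon n, m i = 0 → lin.lt m (Finsupp.single i 1)

/-- A set system `𝓕` shatters `S` if every subset of `S` is the intersection of `S`
with a member of `𝓕`. -/
def Shatters {n : ℕ} (𝓕 : Finset (Finset (Fin n))) (S : Finset (Fin n)) : Prop :=
  ∀ T ⊆ S, ∃ Fm ∈ 𝓕, Fm ∩ S = T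

open scoped Classical in
/-- The family `Sh(𝓕)` of sets shattered by `𝓕`. -/
noncomputable def shatteredFamily {n : ℕ} (𝓕 : Finset (Finset (Fin n))) :
    Finset (Finset (Fin n)) :=
  Finset.univ.filter fun S => Shatters 𝓕 S

/-- A set system is shattering-extremal if it shatters exactly `|𝓕|` sets. -/
def IsSExtremal {n : ℕ} (𝓕 : Finset (Finset (Fin n))) : Prop :=
  (shatteredFamily 𝓕).card = 𝓕.card

/-- The characteristic vector of a set, as a point of `F^n`. -/
def charVec {n : ℕ} (F : Type*) [Field F] (Fm : Finset (Fin n)) : Fin n → F :=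
  fun i => if i ∈ Fm then 1 else 0

/-- The squarefree monomial `∏_{i ∈ S} x_i` associated to a set `S ⊆ [n]`,
as an exponent vector. -/
noncomputable def setMon {n : ℕ} (S : Finset (Fin n)) : Mon n :=
  Finsupp.equivFunOnFinite.symm fun i => if i ∈ S then 1 else 0

/-- The polynomial `f_{S,H} = (∏_{i∈H} x_i) ⬝ ∏_{i∈S∖H} (x_i - 1)`. -/
noncomputable def fSH {n : ℕ} (F : Type*) [Field F] (S H : Finset (Fin n)) :
    MvPolynomial (Fin n) F :=
  (∏ i ∈ H, X i) * ∏ i ∈ S \ H, (X i - 1)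

/-- The downshift `D_i(𝓕)` of a set system. -/
def dshiftSet {n : ℕ} (𝓕 : Finset (Finset (Fin n))) (i : Fin n) :
    Finset (Finset (Fin n)) :=
  𝓕.image (fun Fm => Fm.erase i) ∪ 𝓕.filter fun Fm => i ∈ Fm ∧ Fm.erase i ∈ 𝓕

/-- The iterated downshift `D_{σ(n-1)}(⋯(D_{σ 0}(𝓕)))` of a set system:
downshifts are applied at `σ 0, σ 1, …, σ (n-1)` in this order. -/
def iterDshiftSet {n : ℕ} (σ : Equiv.Perm (Fin n)) (𝓕 : Finset (Finset (Fin n))) :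
    Finset (Finset (Fin n)) :=
  (List.ofFn fun j : Fin n => σ j).foldl dshiftSet 𝓕

/-- Restriction of an exponent vector in `ℕ^{n+1}` to its first `n` coordinates. -/
noncomputable def restrictMon {n : ℕ} (w : Mon (n + 1)) : Mon n :=
  Finsupp.equivFunOnFinite.symm fun i => w i.castSucc

/-!
Fix the lex order with `x_{σ 0} ≻ ⋯ ≻ x_{σ (n-1)}`. Its standard monomials for `V` are exactly the
exponent vectors of the points of `D_{σ(n-1)}(⋯(D_{σ 0}(V)))`, so `V` is extremal iff these
iterated downshifts agree for all `σ`.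

The identity is proved one variable at a time, most significant first. With `i = σ 0` and
`d = m_i`, `x^m` is a leading monomial in `I(V)` iff `x^m / x_i^d` is one in the vanishing ideal
of the union `L_d` of the `i`-lines meeting `V` in more than `d` points. If `f ∈ I(V)` has leading
monomial `x^m`, no exponent of `x_i` in `f` exceeds `d`, so on each line of `L_d` the restriction
of `f` has degree at most `d` and more than `d` roots; hence it vanishes, and with it the
coefficient of `x_i^d`. Conversely, a polynomial `x_i^d + Σ_{c<d} h_c x_i^c`, with the `h_c`
interpolated in the less significant variables, vanishes at the points of `V` on lines with at
most `d` points; multiplying by it lifts a leading monomial from `I(L_d)`. The remaining downshifts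
act on each level `x_i = d` separately, which makes this an induction; along it the point sets are
unions of lines in the variables already treated, i.e. they depend only on the others.
-/

open Finset

theorem Polynomial.coeff_eq_zero_of_forall_sum_mul_pow_eq_zero {K : Type*} [CommRing K]
    [IsDomain K] {D : ℕ} (a : ℕ → K) (T : Finset K) (hT : D < #T)
    (h : ∀ t ∈ T, ∑ c ∈ range (D + 1), a c * t ^ c = 0) {c : ℕ} (hc : c ≤ D) : a c = 0 := by
  set A : Polynomial K := ∑ c ∈ range (D + 1), Polynomial.C (a c) * Polynomial.X ^ c
  have hdeg : A.natDegree ≤ D := natDegree_sum_le_of_forall_le _ _ fun c hc =>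
    (natDegree_C_mul_X_pow_le _ _).trans (Nat.lt_succ_iff.1 (mem_range.1 hc))
  have hA : A = 0 := eq_zero_of_natDegree_lt_card_of_eval_eq_zero' A T
    (fun t ht => by simpa [A, eval_finsetSum] using h t ht) (hdeg.trans_lt hT)
  simpa [A, finsetSum_coeff, coeff_C_mul_X_pow, Nat.lt_succ_iff.2 hc] using
    congrArg (coeff · c) hA

theorem Polynomial.pow_add_sum_coeff_mul_pow_eq_zero {K : Type*} [CommRing K] [Nontrivial K]
    {d : ℕ} {T : Finset K} (hT : #T ≤ d) {x : K} (hx : x ∈ T) :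
    x ^ d + ∑ c ∈ range d,
      (Polynomial.X ^ (d - #T) * ∏ t ∈ T, (Polynomial.X - Polynomial.C t)).coeff c * x ^ c =
        0 := by
  set r := Polynomial.X ^ (d - #T) * ∏ t ∈ T, (Polynomial.X - Polynomial.C t)
  have hprod : (∏ t ∈ T, (Polynomial.X - Polynomial.C t)).Monic :=
    monic_prod_of_monic _ _ fun t _ => monic_X_sub_C t
  have hr : r.Monic := (monic_X_pow _).mul hprod
  have hdeg : r.natDegree = d := by
    rw [(monic_X_pow _).natDegree_mul hprod, natDegree_X_pow,
      natDegree_prod_of_monic _ _ fun t _ => monic_X_sub_C t]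
    simp only [natDegree_X_sub_C, sum_const, smul_eq_mul, mul_one]
    omega
  have hroot : r.eval x = 0 := by simp [r, eval_prod, prod_eq_zero hx]
  rw [hr.as_sum, hdeg] at hroot
  simpa [eval_finsetSum] using hroot

namespace MvPolynomial

variable {ι R K : Type*}

theorem apply_eq_zero_of_mem_supported [CommSemiring R] {S : Set ι}
    {f : MvPolynomial ι R} (hf : f ∈ supported R S) {u : ι →₀ ℕ} (hu : u ∈ f.support)
    {c : ι} (hc : c ∉ S) : u c = 0 := by
  by_contra h
  exact hc (mem_supported.1 hf
    ((mem_vars_iff_mem_support c).2 ⟨u, hu, Finsupp.mem_support_iff.2 h⟩))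

theorem mem_supported_of_apply_eq_zero [CommSemiring R] {S : Set ι}
    {f : MvPolynomial ι R} (hf : ∀ u ∈ f.support, ∀ c ∉ S, u c = 0) : f ∈ supported R S := by
  refine mem_supported.2 fun c hc => ?_
  obtain ⟨u, hu, hcu⟩ := (mem_vars_iff_mem_support c).1 hc
  by_contra h
  exact Finsupp.mem_support_iff.1 hcu (hf u hu c h)

theorem dependsOn_eval_of_mem_supported [CommSemiring R] {S : Set ι}
    {f : MvPolynomial ι R} (hf : f ∈ supported R S) : DependsOn (fun x => eval x f) S := by
  intro x y hxy
  rw [supported_eq_range_rename] at hf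
  obtain ⟨f, rfl⟩ := hf
  change eval x (rename Subtype.val f) = eval y (rename Subtype.val f)
  rw [eval_rename, eval_rename,
    show x ∘ Subtype.val = y ∘ Subtype.val from _root_.funext fun c => hxy c.1 c.2]

theorem exists_mem_supported_separating [Field K] (S : Set ι) (x : ι → K)
    (P : Finset (ι → K)) (hP : ∀ y ∈ P, ∃ c ∈ S, x c ≠ y c) :
    ∃ g ∈ supported K S, eval x g = 1 ∧ ∀ y ∈ P, eval y g = 0 := by
  classical
  induction P using Finset.induction_on with
  | empty => exact ⟨1, Subalgebra.one_mem _, map_one _, by simp⟩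
  | insert y P _ ih =>
    obtain ⟨g, hgS, hgx, hgP⟩ := ih fun z hz => hP z (mem_insert_of_mem hz)
    obtain ⟨c, hcS, hc⟩ := hP y (mem_insert_self y P)
    refine ⟨g * (C (x c - y c)⁻¹ * (X c - C (y c))), ?_, ?_, ?_⟩
    · exact Subalgebra.mul_mem _ hgS (Subalgebra.mul_mem _ (Subalgebra.algebraMap_mem _ _)
        (Subalgebra.sub_mem _ (X_mem_supported.2 hcS) (Subalgebra.algebraMap_mem _ _)))
    · simp [hgx, sub_ne_zero.2 hc]
    · intro z hz
      obtain rfl | hz := mem_insert.1 hz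
      · simp
      · simp [hgP z hz]

theorem exists_mem_supported_eval_eq {α : Type*} [Field K] (S : Set ι)
    (P : Finset α) (e : α → ι → K) (ψ : α → K)
    (hψ : ∀ a ∈ P, ∀ b ∈ P, (∀ c ∈ S, e a c = e b c) → ψ a = ψ b) :
    ∃ h ∈ supported K S, ∀ a ∈ P, eval (e a) h = ψ a := by
  classical
  induction P using Finset.induction_on with
  | empty => exact ⟨0, Subalgebra.zero_mem _, by simp⟩
  | insert a P _ ih =>
    obtain ⟨h, hS, hP⟩ :=
      ih fun x hx y hy => hψ x (mem_insert_of_mem hx) y (mem_insert_of_mem hy)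
    by_cases hsame : ∃ b ∈ P, ∀ c ∈ S, e a c = e b c
    · obtain ⟨b, hb, hab⟩ := hsame
      refine ⟨h, hS, fun x hx => ?_⟩
      obtain rfl | hx := mem_insert.1 hx
      · rw [show eval (e x) h = eval (e b) h from dependsOn_eval_of_mem_supported hS hab,
          hP b hb, hψ _ (mem_insert_self _ _) b (mem_insert_of_mem hb) hab]
      · exact hP x hx
    · push Not at hsame
      obtain ⟨g, hgS, hga, hgP⟩ := exists_mem_supported_separating S (e a) (P.image e)
        (by simpa using hsame)
      refine ⟨h + C (ψ a - eval (e a) h) * g,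
        Subalgebra.add_mem _ hS (Subalgebra.mul_mem _ (Subalgebra.algebraMap_mem _ _) hgS),
        fun x hx => ?_⟩
      obtain rfl | hx := mem_insert.1 hx
      · simp [hga]
      · simp [hgP _ (mem_image_of_mem e hx), hP x hx]

section CoeffInVar

variable [CommSemiring R]

noncomputable def coeffInVar (i : ι) (d : ℕ) (f : MvPolynomial ι R) :
    MvPolynomial ι R :=
  ∑ u ∈ f.support with u i = d, monomial (u.erase i) (coeff u f)

theorem coeff_coeffInVar (i : ι) (d : ℕ) (f : MvPolynomial ι R) (v : ι →₀ ℕ) :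
    coeff v (coeffInVar i d f) = if v i = 0 then coeff (v + Finsupp.single i d) f else 0 := by
  classical
  have key : ∀ u : ι →₀ ℕ,
      (u i = d ∧ u.erase i = v) ↔ (v i = 0 ∧ u = v + Finsupp.single i d) := by
    intro u
    constructor
    · rintro ⟨rfl, rfl⟩
      exact ⟨by simp, (Finsupp.erase_add_single i u).symm⟩
    · rintro ⟨hv, rfl⟩
      simp [Finsupp.erase_add, Finsupp.erase_of_notMem_support, hv]
  simp only [coeffInVar, coeff_sum, coeff_monomial]
  rw [sum_filter]
  simp_rw [← ite_and, key]
  split_ifs with hv <;> simp [hv, eq_comm]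

theorem apply_eq_zero_of_mem_support_coeffInVar {i : ι} {d : ℕ} {f : MvPolynomial ι R}
    {v : ι →₀ ℕ} (hv : v ∈ (coeffInVar i d f).support) : v i = 0 := by
  by_contra h
  simp [coeff_coeffInVar, h] at hv

theorem coeffInVar_mem_supported (i : ι) (d : ℕ) (f : MvPolynomial ι R) :
    coeffInVar i d f ∈ supported R {i}ᶜ :=
  mem_supported_of_apply_eq_zero fun _ hv c hc => by
    rw [Set.notMem_compl_iff.1 hc]
    exact apply_eq_zero_of_mem_support_coeffInVar hv

theorem sum_coeffInVar_mul_X_pow {i : ι} {D : ℕ} {f : MvPolynomial ι R}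
    (hf : ∀ u ∈ f.support, u i ≤ D) :
    ∑ c ∈ range (D + 1), coeffInVar i c f * X i ^ c = f := by
  classical
  conv_rhs => rw [← support_sum_monomial_coeff f,
    ← sum_fiberwise_of_maps_to (g := fun u => u i) (t := range (D + 1))
      fun u hu => mem_range.2 (Nat.lt_succ_of_le (hf u hu))]
  refine sum_congr rfl fun c _ => ?_
  rw [coeffInVar, sum_mul]
  refine sum_congr rfl fun u hu => ?_
  obtain ⟨-, rfl⟩ := mem_filter.1 hu
  rw [X_pow_eq_monomial, monomial_mul, mul_one, Finsupp.erase_add_single]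

theorem eval_update_eq_sum_coeffInVar [DecidableEq ι] {i : ι} {D : ℕ}
    {f : MvPolynomial ι R} (hf : ∀ u ∈ f.support, u i ≤ D) (x : ι → R) (t : R) :
    eval (Function.update x i t) f =
      ∑ c ∈ range (D + 1), eval x (coeffInVar i c f) * t ^ c := by
  conv_lhs => rw [← sum_coeffInVar_mul_X_pow hf]
  simp only [map_sum, map_mul, map_pow, eval_X, Function.update_self]
  refine sum_congr rfl fun c _ => congrArg (· * t ^ c) ?_
  exact dependsOn_eval_of_mem_supported (coeffInVar_mem_supported i c f)
    fun j hj => Function.update_of_ne hj _ _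

end CoeffInVar

end MvPolynomial

section LexOrder

variable {n : ℕ} {σ : Equiv.Perm (Fin n)} {u v : Mon n}

def lexKey (σ : Equiv.Perm (Fin n)) (u : Mon n) : Lex (Fin n → ℕ) :=
  toLex fun p => u (σ p)

theorem lexKey_add (σ : Equiv.Perm (Fin n)) (u v : Mon n) :
    lexKey σ (u + v) = lexKey σ u + lexKey σ v :=
  rfl

theorem lexKey_injective (σ : Equiv.Perm (Fin n)) : Function.Injective (lexKey σ) := by
  intro u v h
  ext c
  simpa [lexKey] using congrFun (congrArg ofLex h) (σ.symm c)

theorem lexKey_zero_le (σ : Equiv.Perm (Fin n)) (u : Mon n) : lexKey σ 0 ≤ lexKey σ u :=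
  Pi.toLex_monotone fun _ => Nat.zero_le _

theorem lexKey_lt_iff : lexKey σ u < lexKey σ v ↔ lexLt σ u v :=
  ⟨fun ⟨p, hagree, hlt⟩ => ⟨p, hlt, hagree⟩, fun ⟨p, hlt, hagree⟩ => ⟨p, hagree, hlt⟩⟩

noncomputable abbrev lexOrder (σ : Equiv.Perm (Fin n)) : LinearOrder (Mon n) :=
  LinearOrder.lift' (lexKey σ) (lexKey_injective σ)

theorem isLexOrder_lexOrder (σ : Equiv.Perm (Fin n)) : IsLexOrder σ (lexOrder σ) :=
  fun _ _ => lexKey_lt_iff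

theorem IsLexOrder.eq_lexOrder {lin : LinearOrder (Mon n)} (h : IsLexOrder σ lin) :
    lin = lexOrder σ :=
  LinearOrder.ext_lt fun u v => (h u v).trans lexKey_lt_iff.symm

theorem isLeadMon_lexOrder_iff {R : Type*} [CommSemiring R] {f : MvPolynomial (Fin n) R}
    {m : Mon n} :
    IsLeadMon (lexOrder σ) f m ↔ m ∈ f.support ∧ ∀ u ∈ f.support, lexKey σ u ≤ lexKey σ m :=
  Iff.rfl

def topVars (σ : Equiv.Perm (Fin n)) (j : ℕ) : Set (Fin n) :=
  {c | (σ.symm c : ℕ) < j}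

theorem apply_mem_topVars {p : Fin n} {j : ℕ} : σ p ∈ topVars σ j ↔ (p : ℕ) < j := by
  simp [topVars]

theorem topVars_succ (p : Fin n) : topVars σ (p + 1) = insert (σ p) (topVars σ p) := by
  ext c
  simp only [topVars, Set.mem_ofPred_eq, Set.mem_insert_iff, ← Equiv.symm_apply_eq,
    ← Fin.val_inj]
  omega

theorem insert_compl_topVars_succ (p : Fin n) :
    insert (σ p) (topVars σ (p + 1))ᶜ = (topVars σ p)ᶜ := by
  ext c
  simp only [topVars, Set.mem_insert_iff, Set.mem_compl_iff, Set.mem_ofPred_eq,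
    ← Equiv.symm_apply_eq, ← Fin.val_inj]
  omega

theorem lexKey_le_apply_le {p : Fin n} (h : lexKey σ u ≤ lexKey σ v)
    (hv : ∀ c ∈ topVars σ p, v c = 0) : u (σ p) ≤ v (σ p) := by
  obtain h | h := h.lt_or_eq
  · obtain ⟨r, hlt, hagree⟩ := lexKey_lt_iff.1 h
    obtain hpr | rfl | hrp := lt_trichotomy p r
    · exact (hagree p hpr).le
    · exact hlt.le
    · exact absurd hlt (by simp [hv _ (apply_mem_topVars.2 hrp)])
  · rw [lexKey_injective σ h]

theorem lexKey_lt_of_apply_lt {p : Fin n} (hu : ∀ c ∈ topVars σ p, u c = 0)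
    (hv : ∀ c ∈ topVars σ p, v c = 0) (h : u (σ p) < v (σ p)) : lexKey σ u < lexKey σ v :=
  lexKey_lt_iff.2 ⟨p, h, fun q hq => by
    rw [hu _ (apply_mem_topVars.2 hq), hv _ (apply_mem_topVars.2 hq)]⟩

variable {R : Type*} [CommSemiring R] {f g : MvPolynomial (Fin n) R} {a b m : Mon n}

theorem IsLeadMon.ne_zero {lin : LinearOrder (Mon n)} (h : IsLeadMon lin f m) : f ≠ 0 := by
  rintro rfl
  simp [IsLeadMon] at h

theorem isLeadMon_X_pow [Nontrivial R] (i : Fin n) (d : ℕ) :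
    IsLeadMon (lexOrder σ) (X i ^ d : MvPolynomial (Fin n) R) (Finsupp.single i d) := by
  simp [isLeadMon_lexOrder_iff, support_X_pow]

theorem IsLeadMon.add_of_lt (hf : IsLeadMon (lexOrder σ) f m)
    (hg : ∀ u ∈ g.support, lexKey σ u < lexKey σ m) : IsLeadMon (lexOrder σ) (f + g) m := by
  classical
  rw [isLeadMon_lexOrder_iff] at hf ⊢
  have hm : coeff m g = 0 := notMem_support_iff.1 fun h => (hg m h).false
  refine ⟨by simpa [coeff_add, hm] using hf.1, fun u hu => ?_⟩
  obtain hu | hu := mem_union.1 (support_add hu)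
  · exact hf.2 u hu
  · exact (hg u hu).le

theorem IsLeadMon.mul [NoZeroDivisors R] (hf : IsLeadMon (lexOrder σ) f a)
    (hg : IsLeadMon (lexOrder σ) g b) : IsLeadMon (lexOrder σ) (f * g) (a + b) := by
  classical
  rw [isLeadMon_lexOrder_iff] at hf hg ⊢
  have hcoeff : coeff (a + b) (f * g) = coeff a f * coeff b g := by
    rw [coeff_mul]
    refine sum_eq_single (a, b) (fun ⟨u, v⟩ huv hne => ?_) (by simp)
    by_contra h
    have hu := hf.2 u (mem_support_iff.2 (left_ne_zero_of_mul h))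
    have hv := hg.2 v (mem_support_iff.2 (right_ne_zero_of_mul h))
    have huv' : lexKey σ u + lexKey σ v = lexKey σ a + lexKey σ b := by
      rw [← lexKey_add, ← lexKey_add, (mem_antidiagonal.1 huv)]
    obtain ⟨hua, hvb⟩ := (add_eq_add_iff_eq_and_eq hu hv).1 huv'
    exact hne (Prod.ext (lexKey_injective σ hua) (lexKey_injective σ hvb))
  refine ⟨by simpa [hcoeff] using
    mul_ne_zero (mem_support_iff.1 hf.1) (mem_support_iff.1 hg.1), fun w hw => ?_⟩
  obtain ⟨u, hu, v, hv, rfl⟩ := mem_add.1 (support_mul f g hw)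
  rw [lexKey_add, lexKey_add]
  exact add_le_add (hf.2 u hu) (hg.2 v hv)

theorem IsLeadMon.coeffInVar (hf : IsLeadMon (lexOrder σ) f m) (i : Fin n) :
    IsLeadMon (lexOrder σ) (coeffInVar i (m i) f) (m.erase i) := by
  rw [isLeadMon_lexOrder_iff] at hf ⊢
  refine ⟨?_, fun v hv => ?_⟩
  · simpa [mem_support_iff, coeff_coeffInVar, Finsupp.erase_add_single] using hf.1
  · have hvi := apply_eq_zero_of_mem_support_coeffInVar hv
    have hv' : v + Finsupp.single i (m i) ∈ f.support := by
      simpa [mem_support_iff, coeff_coeffInVar, hvi] using hv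
    have hm : lexKey σ m = lexKey σ (m.erase i) + lexKey σ (Finsupp.single i (m i)) := by
      rw [← lexKey_add, Finsupp.erase_add_single]
    have := hf.2 _ hv'
    rw [lexKey_add, hm] at this
    exact le_of_add_le_add_right this

theorem isLeadMon_X_pow_add_sum [Nontrivial R] (p : Fin n) (d : ℕ)
    (h : ℕ → MvPolynomial (Fin n) R) (hS : ∀ c, h c ∈ supported R (topVars σ (p + 1))ᶜ) :
    IsLeadMon (lexOrder σ) (X (σ p) ^ d + ∑ c ∈ range d, h c * X (σ p) ^ c)
      (Finsupp.single (σ p) d) := by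
  classical
  refine (isLeadMon_X_pow (σ p) d).add_of_lt fun u hu => ?_
  obtain ⟨c, hc, hu⟩ := mem_biUnion.1 (support_sum hu)
  obtain ⟨v, hv, _, he, rfl⟩ := mem_add.1 (support_mul _ _ hu)
  rw [support_X_pow, mem_singleton] at he
  subst he
  have hv0 (j : Fin n) (hj : j ∈ topVars σ (p + 1)) : v j = 0 :=
    apply_eq_zero_of_mem_supported (hS c) hv (not_not.2 hj)
  have hsingle (e : ℕ) (j : Fin n) (hj : j ∈ topVars σ p) : Finsupp.single (σ p) e j = 0 :=
    Finsupp.single_eq_of_ne (by rintro rfl; exact lt_irrefl _ (apply_mem_topVars.1 hj))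
  refine lexKey_lt_of_apply_lt (p := p) (fun j hj => ?_) (hsingle d) ?_
  · rw [topVars_succ] at hv0
    simp [hv0 j (Or.inr hj), hsingle c j hj]
  · rw [topVars_succ] at hv0
    simpa [hv0 (σ p) (Set.mem_insert _ _)] using mem_range.1 hc

end LexOrder

section Downshift

variable {n k : ℕ}

def coordSection (V : Finset (Fin n → Fin k)) (i : Fin n) (w : Fin n → Fin k) :
    Finset (Fin k) :=
  univ.filter fun α => Function.update w i α ∈ V

def downshiftLayer (V : Finset (Fin n → Fin k)) (i : Fin n) (d : ℕ) :
    Finset (Fin n → Fin k) :=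
  univ.filter fun w => d < #(coordSection V i w)

theorem mem_downshift {V : Finset (Fin n → Fin k)} {i : Fin n} {w : Fin n → Fin k} :
    w ∈ downshift V i ↔ (w i : ℕ) < #(coordSection V i w) := by
  simp [downshift, coordSection]

theorem mem_downshiftLayer {V : Finset (Fin n → Fin k)} {i : Fin n} {d : ℕ}
    {w : Fin n → Fin k} : w ∈ downshiftLayer V i d ↔ d < #(coordSection V i w) := by
  simp [downshiftLayer]

theorem card_coordSection_le (V : Finset (Fin n → Fin k)) (i : Fin n) (w : Fin n → Fin k) :
    #(coordSection V i w) ≤ k :=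
  (card_le_univ _).trans_eq (Fintype.card_fin k)

theorem coordSection_congr {V : Finset (Fin n → Fin k)} {i : Fin n} {S : Set (Fin n)}
    (hV : DependsOn (· ∈ V) (insert i S)) {w w' : Fin n → Fin k}
    (h : ∀ c ∈ S, w c = w' c) : coordSection V i w = coordSection V i w' := by
  refine filter_congr fun α _ => Eq.to_iff (hV fun c hc => ?_)
  obtain rfl | hc := hc
  · simp
  · by_cases hci : c = i
    · simp [hci]
    · simp [Function.update_of_ne hci, h c hc]

theorem dependsOn_downshiftLayer {V : Finset (Fin n → Fin k)} {i : Fin n} {S : Set (Fin n)}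
    (hV : DependsOn (· ∈ V) (insert i S)) (d : ℕ) :
    DependsOn (· ∈ downshiftLayer V i d) S := fun _ _ h => by
  simp only [mem_downshiftLayer, coordSection_congr hV h]

theorem dependsOn_downshift {V : Finset (Fin n → Fin k)} {i : Fin n} {S : Set (Fin n)}
    (hV : DependsOn (· ∈ V) S) (hi : i ∈ S) : DependsOn (· ∈ downshift V i) S :=
  fun _ _ h => by
    simp only [mem_downshift, h i hi, coordSection_congr (Set.insert_eq_of_mem hi ▸ hV) h]

theorem dependsOn_foldl_downshift {S : Set (Fin n)} {L : List (Fin n)} (hL : ∀ j ∈ L, j ∈ S)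
    {V : Finset (Fin n → Fin k)} (hV : DependsOn (· ∈ V) S) :
    DependsOn (· ∈ L.foldl downshift V) S := by
  induction L generalizing V with
  | nil => exact hV
  | cons j L ih =>
    exact ih (fun l hl => hL l (List.mem_cons_of_mem j hl))
      (dependsOn_downshift hV (hL j List.mem_cons_self))

theorem foldl_downshift_empty (L : List (Fin n)) :
    L.foldl downshift (∅ : Finset (Fin n → Fin k)) = ∅ := by
  induction L with
  | nil => rfl
  | cons j L ih =>
    rw [List.foldl_cons, show downshift ∅ j = ∅ by ext; simp [mem_downshift, coordSection], ih]

theorem downshift_eq_filter (V : Finset (Fin n → Fin k)) (i : Fin n) :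
    downshift V i = univ.filter fun w => w ∈ downshiftLayer V i (w i) := by
  ext w
  simp [mem_downshift, mem_downshiftLayer]

theorem foldl_downshift_filter {i : Fin n} {L : List (Fin n)} (hiL : i ∉ L)
    (A : ℕ → Finset (Fin n → Fin k)) :
    L.foldl downshift (univ.filter fun w => w ∈ A (w i)) =
      univ.filter fun w => w ∈ L.foldl downshift (A (w i)) := by
  induction L generalizing A with
  | nil => rfl
  | cons j L ih =>
    have hji : j ≠ i := fun h => hiL (h ▸ List.mem_cons_self)
    have hstep : downshift (univ.filter fun w => w ∈ A (w i)) j =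
        univ.filter fun w => w ∈ downshift (A (w i)) j := by
      ext w
      simp only [mem_filter, mem_univ, true_and, mem_downshift, coordSection,
        Function.update_of_ne hji.symm]
    rw [List.foldl_cons, hstep]
    exact ih (fun h => hiL (List.mem_cons_of_mem j h)) fun d => downshift (A d) j

theorem toExp_apply (w : Fin n → Fin k) (c : Fin n) : toExp w c = w c := by
  simp [toExp]

theorem toExp_injective : Function.Injective (toExp : (Fin n → Fin k) → Mon n) :=
  fun w w' h => funext fun c => Fin.ext (by simpa [toExp_apply] using DFunLike.congr_fun h c)

theorem mem_image_toExp_foldl_downshift_cons {i : Fin n} {L : List (Fin n)} (hiL : i ∉ L)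
    (V : Finset (Fin n → Fin k)) (m : Mon n) :
    m ∈ toExp (k := k) '' ↑((i :: L).foldl downshift V) ↔
      m.erase i ∈ toExp (k := k) '' ↑(L.foldl downshift (downshiftLayer V i (m i))) := by
  have hdep (d : ℕ) : DependsOn (· ∈ L.foldl downshift (downshiftLayer V i d)) {i}ᶜ :=
    dependsOn_foldl_downshift (fun j hj (hji : j = i) => hiL (hji ▸ hj))
      (dependsOn_downshiftLayer ((dependsOn_univ _).mono fun c _ => em (c = i)) d)
  rw [List.foldl_cons, downshift_eq_filter, foldl_downshift_filter hiL]
  constructor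
  · rintro ⟨w, hw, rfl⟩
    refine ⟨Function.update w i ⟨0, (w i).pos⟩, ?_, ?_⟩
    · refine Eq.mp (hdep _ fun c (hc : c ≠ i) => ?_) (mem_filter.1 hw).2
      simp [Function.update_of_ne hc]
    · ext c
      by_cases hc : c = i <;> simp [toExp_apply, hc]
  · rintro ⟨w, hw, hwm⟩
    obtain ⟨u, hu⟩ : (downshiftLayer V i (m i)).Nonempty := by
      by_contra h
      simp [not_nonempty_iff_eq_empty.1 h, foldl_downshift_empty] at hw
    have hmk : m i < k := (mem_downshiftLayer.1 hu).trans_le (card_coordSection_le V i u)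
    refine ⟨Function.update w i ⟨m i, hmk⟩, ?_, ?_⟩
    · simp only [coe_filter, mem_univ, true_and, Set.mem_ofPred_eq, Function.update_self]
      refine Eq.mp (hdep _ fun c (hc : c ≠ i) => ?_) hw
      simp [Function.update_of_ne hc]
    · ext c
      by_cases hc : c = i
      · simp [toExp_apply, hc]
      · simpa [toExp_apply, Finsupp.erase_apply, hc, Function.update_of_ne hc] using
          DFunLike.congr_fun hwm c

end Downshift

section StandardMonomials

variable {n k : ℕ} {σ : Equiv.Perm (Fin n)} {F : Type*} [Field F]

theorem mem_vanishIdeal_image_iff {V : Finset (Fin n → Fin k)} {f : MvPolynomial (Fin n) F} :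
    f ∈ vanishIdeal (toField F '' (V : Set (Fin n → Fin k))) ↔
      ∀ w ∈ V, eval (toField F w) f = 0 :=
  Set.forall_mem_image

theorem toField_update (w : Fin n → Fin k) (i : Fin n) (α : Fin k) :
    toField F (Function.update w i α) = Function.update (toField F w) i ((α : ℕ) : F) := by
  ext c
  by_cases hc : c = i
  · subst hc
    simp [toField]
  · simp [toField, Function.update_of_ne hc]

theorem zero_mem_stdMon_lexOrder_iff {R : Type*} [CommRing R] [Nontrivial R]
    (S : Set (Fin n → R)) :
    0 ∈ stdMon (lexOrder σ) (vanishIdeal S) ↔ S.Nonempty := by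
  simp only [stdMon, Set.mem_ofPred_eq, not_exists, not_and, isLeadMon_lexOrder_iff]
  constructor
  · intro h
    by_contra hS
    refine h 1 (fun x hx => (hS ⟨x, hx⟩).elim) one_ne_zero ?_ ?_ <;> simp
  · rintro ⟨x, hx⟩ f hf - h0 hle
    have hsupp (u : Mon n) (hu : u ∈ f.support) : u = 0 :=
      lexKey_injective σ ((hle u hu).antisymm (lexKey_zero_le σ u))
    have heval : eval x f = coeff 0 f := by
      rw [eval_eq, sum_eq_single 0 (fun u hu hne => absurd (hsupp u hu) hne)
        (fun h => by simp [notMem_support_iff.1 h])]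
      simp
    exact mem_support_iff.1 h0 (heval ▸ hf x hx)

theorem zero_mem_stdMon_iff_zero_mem_image_toExp {V : Finset (Fin n → Fin k)}
    (hV : DependsOn (· ∈ V) ∅) :
    0 ∈ stdMon (lexOrder σ) (vanishIdeal (toField F '' (V : Set (Fin n → Fin k)))) ↔
      0 ∈ toExp '' (V : Set (Fin n → Fin k)) := by
  rw [zero_mem_stdMon_lexOrder_iff, Set.image_nonempty, coe_nonempty]
  constructor
  · rintro ⟨w, hw⟩
    exact ⟨fun c => ⟨0, (w c).pos⟩, Eq.mp (hV.empty w _) hw,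
      Finsupp.ext fun c => by simp [toExp_apply]⟩
  · rintro ⟨w, hw, -⟩
    exact ⟨w, hw⟩

theorem exists_isLeadMon_single_vanishing [CharZero F] (p : Fin n)
    {V : Finset (Fin n → Fin k)} (hV : DependsOn (· ∈ V) (topVars σ p)ᶜ) (d : ℕ) :
    ∃ q : MvPolynomial (Fin n) F, IsLeadMon (lexOrder σ) q (Finsupp.single (σ p) d) ∧
      ∀ w ∈ V, #(coordSection V (σ p) w) ≤ d → eval (toField F w) q = 0 := by
  classical
  let T (w : Fin n → Fin k) : Finset F :=
    (coordSection V (σ p) w).image fun α : Fin k => ((α : ℕ) : F)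
  have hT (w : Fin n → Fin k) : #(T w) = #(coordSection V (σ p) w) :=
    card_image_of_injective _ fun a b h => Fin.ext (Nat.cast_injective h)
  choose h hS hh using fun c => exists_mem_supported_eval_eq (topVars σ (p + 1))ᶜ
    (V.filter fun w => #(coordSection V (σ p) w) ≤ d) (toField F)
    (fun w => (Polynomial.X ^ (d - #(T w)) *
      ∏ t ∈ T w, (Polynomial.X - Polynomial.C t)).coeff c)
    fun a _ b _ hab => by
      simp only [T, coordSection_congr (w := a) (w' := b) (insert_compl_topVars_succ p ▸ hV)
        fun j hj => Fin.ext (by simpa [toField] using hab j hj)]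
  refine ⟨_, isLeadMon_X_pow_add_sum p d h hS, fun w hw hsmall => ?_⟩
  simp only [map_add, map_sum, map_mul, map_pow, eval_X, hh _ w (mem_filter.2 ⟨hw, hsmall⟩)]
  have hw' : w (σ p) ∈ coordSection V (σ p) w := by simpa [coordSection] using hw
  exact Polynomial.pow_add_sum_coeff_mul_pow_eq_zero ((hT w).trans_le hsmall)
    (mem_image_of_mem _ hw')

theorem coeffInVar_mem_vanishIdeal_downshiftLayer [CharZero F] {V : Finset (Fin n → Fin k)}
    {i : Fin n} {d : ℕ} {f : MvPolynomial (Fin n) F}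
    (hf : f ∈ vanishIdeal (toField F '' (V : Set (Fin n → Fin k))))
    (hdeg : ∀ u ∈ f.support, u i ≤ d) :
    coeffInVar i d f ∈
      vanishIdeal (toField F '' (downshiftLayer V i d : Set (Fin n → Fin k))) := by
  classical
  rw [mem_vanishIdeal_image_iff] at hf ⊢
  intro w hw
  refine Polynomial.coeff_eq_zero_of_forall_sum_mul_pow_eq_zero
    (fun c => eval (toField F w) (coeffInVar i c f))
    ((coordSection V i w).image fun α : Fin k => ((α : ℕ) : F)) ?_ (fun t ht => ?_) le_rfl
  · rw [card_image_of_injective _ fun a b h => Fin.ext (Nat.cast_injective h)]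
    exact mem_downshiftLayer.1 hw
  · obtain ⟨α, hα, rfl⟩ := mem_image.1 ht
    rw [← eval_update_eq_sum_coeffInVar hdeg, ← toField_update]
    exact hf _ (mem_filter.1 hα).2

theorem mem_stdMon_iff_erase_mem_stdMon_downshiftLayer [CharZero F] (p : Fin n)
    {V : Finset (Fin n → Fin k)} (hV : DependsOn (· ∈ V) (topVars σ p)ᶜ) {m : Mon n}
    (hm : ∀ c ∈ topVars σ p, m c = 0) :
    m ∈ stdMon (lexOrder σ) (vanishIdeal (toField F '' (V : Set (Fin n → Fin k)))) ↔
      m.erase (σ p) ∈ stdMon (lexOrder σ) (vanishIdeal (toField F ''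
        (downshiftLayer V (σ p) (m (σ p)) : Set (Fin n → Fin k)))) := by
  simp only [stdMon, Set.mem_ofPred_eq, not_iff_not]
  constructor
  · rintro ⟨f, hf, -, hlead⟩
    have hdeg (u : Mon n) (hu : u ∈ f.support) : u (σ p) ≤ m (σ p) :=
      lexKey_le_apply_le (((isLeadMon_lexOrder_iff).1 hlead).2 u hu) hm
    exact ⟨_, coeffInVar_mem_vanishIdeal_downshiftLayer hf hdeg,
      (hlead.coeffInVar _).ne_zero, hlead.coeffInVar _⟩
  · rintro ⟨g, hg, -, hlead⟩
    obtain ⟨q, hq, hqV⟩ := exists_isLeadMon_single_vanishing (F := F) p hV (m (σ p))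
    have hqg := hq.mul hlead
    rw [Finsupp.single_add_erase] at hqg
    refine ⟨q * g, (mem_vanishIdeal_image_iff).2 fun w hw => ?_, hqg.ne_zero, hqg⟩
    rw [map_mul]
    by_cases hsmall : #(coordSection V (σ p) w) ≤ m (σ p)
    · rw [hqV w hw hsmall, zero_mul]
    · rw [mem_vanishIdeal_image_iff.1 hg w (mem_downshiftLayer.2 (not_le.1 hsmall)), mul_zero]

theorem mem_stdMon_lexOrder_iff [CharZero F] (j : ℕ) (V : Finset (Fin n → Fin k))
    (hV : DependsOn (· ∈ V) (topVars σ j)ᶜ) (m : Mon n) (hm : ∀ c ∈ topVars σ j, m c = 0) :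
    m ∈ stdMon (lexOrder σ) (vanishIdeal (toField F '' (V : Set (Fin n → Fin k)))) ↔
      m ∈ toExp (k := k) '' ↑(((List.ofFn fun q => σ q).drop j).foldl downshift V) := by
  induction h : n - j generalizing j V m with
  | zero =>
    have htop (c : Fin n) : c ∈ topVars σ j := by
      have := (σ.symm c).isLt
      simp only [topVars, Set.mem_ofPred_eq]
      omega
    obtain rfl : m = 0 := Finsupp.ext fun c => hm c (htop c)
    rw [List.drop_eq_nil_of_le (by simp; omega), List.foldl_nil]
    exact zero_mem_stdMon_iff_zero_mem_image_toExp
      (hV.mono fun c (hc : c ∈ (topVars σ j)ᶜ) => (hc (htop c)).elim)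
  | succ t ih =>
    have hj : j < n := by omega
    set p : Fin n := ⟨j, hj⟩
    have hdrop :
        (List.ofFn fun q => σ q).drop j = σ p :: (List.ofFn fun q => σ q).drop (j + 1) := by
      rw [List.drop_eq_getElem_cons (by simpa using hj)]
      simp [p]
    have hpL : σ p ∉ (List.ofFn fun q => σ q).drop (j + 1) := by
      simp only [List.mem_drop_iff_getElem, List.getElem_ofFn, EmbeddingLike.apply_eq_iff_eq, p,
        Fin.ext_iff, not_exists]
      omega
    rw [hdrop, mem_image_toExp_foldl_downshift_cons hpL,
      mem_stdMon_iff_erase_mem_stdMon_downshiftLayer p hV hm]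
    refine ih (j + 1) _ (dependsOn_downshiftLayer ?_ _) _ (fun c hc => ?_) (by omega)
    · rwa [insert_compl_topVars_succ p]
    · rw [topVars_succ p] at hc
      rw [Finsupp.erase_apply]
      split_ifs with hcp
      · rfl
      · exact hm c (hc.resolve_left hcp)

end StandardMonomials

theorem stdMon_lexOrder_eq_image_iterDownshift {n k : ℕ} {F : Type*} [Field F] [CharZero F]
    (σ : Equiv.Perm (Fin n)) (V : Finset (Fin n → Fin k)) :
    stdMon (lexOrder σ) (vanishIdeal (toField F '' (V : Set (Fin n → Fin k)))) =
      toExp '' (iterDownshift σ V : Set (Fin n → Fin k)) :=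
  Set.ext fun m => mem_stdMon_lexOrder_iff 0 V (by simpa [topVars] using dependsOn_univ _) m
    (by simp [topVars])

/-- Corollary `downshiftcor`.
A finite point set `𝒱 ⊆ {0,…,k-1}^n` is extremal if and only if the iterated downshift
`D_{π(n),π(n-1),…,π(1)}(𝒱)` is the same for every permutation `π` of `[n]`. -/
theorem extremal_iff_iterated_downshift_invariant {n k : ℕ}
    (V : Finset (Fin n → Fin k)) :
    IsExtremal ((V.image (toField ℚ) : Finset (Fin n → ℚ)) : Set (Fin n → ℚ)) ↔
      ∀ σ₁ σ₂ : Equiv.Perm (Fin n), iterDownshift σ₁ V = iterDownshift σ₂ V := by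
  have hstd (σ : Equiv.Perm (Fin n)) (lin : LinearOrder (Mon n)) (h : IsLexOrder σ lin) :
      stdMon lin (vanishIdeal (V.image (toField ℚ) : Set (Fin n → ℚ))) =
        toExp '' (iterDownshift σ V : Set (Fin n → Fin k)) := by
    rw [h.eq_lexOrder, coe_image, stdMon_lexOrder_eq_image_iterDownshift]
  constructor
  · intro hext σ₁ σ₂
    have h := hext σ₁ σ₂ _ _ (isLexOrder_lexOrder σ₁) (isLexOrder_lexOrder σ₂)
    rw [hstd _ _ (isLexOrder_lexOrder σ₁), hstd _ _ (isLexOrder_lexOrder σ₂)] at h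
    exact coe_injective (toExp_injective.image_injective h)
  · intro hinv σ₁ σ₂ lin₁ lin₂ h₁ h₂
    rw [hstd σ₁ lin₁ h₁, hstd σ₂ lin₂ h₂, hinv σ₁ σ₂]
end

section
/- Let 𝒱 ⊆ {0,1,…,k−1}^n ⊆ ℝ^n be a finite point set. If for some single term order ≺ the vanishing ideal I(𝒱) ⊴ ℝ[x_1,…,x_n] has a Gröbner basis with respect to ≺ consisting of degree dominated polynomials, then 𝒱 is extremal. -/
open MvPolynomial

/-!
Call `h` dominated by `m` if `x^m` is the largest monomial of `h` for divisibility. A term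
order refines divisibility, so then `x^m` is the leading monomial of `h` for every term order.
Dividing by a degree dominated `g` with dominating term `x^w` replaces a term `c x^m` (where
`x^w ∣ x^m`) by `c x^{m-w} g`, which is dominated by `m`. So the division algorithm for `≺`,
which never gets stuck because `G` is a Gröbner basis, writes every `f ∈ I` as `∑_{m ∈ T} h_m`
with distinct `m` and each `h_m ∈ I` dominated by `m`. For any term order the leading monomial
of such a sum is the largest `m ∈ T`, since no other summand contains it. Hence for every term
order the standard monomials of `I` are exactly the `m` dominating no element of `I`.
-/

section TermOrder

variable {n : ℕ} {lin : LinearOrder (Mon n)}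

theorem IsTermOrder.le_of_le (hlin : IsTermOrder lin) {u v : Mon n} (h : u ≤ v) :
    lin.le u v := by
  obtain ⟨w, rfl⟩ := le_iff_exists_add.mp h
  simpa [add_comm] using hlin.2 0 w u (hlin.1 w)

theorem IsTermOrder.wellFounded (hlin : IsTermOrder lin) : WellFounded lin.lt := by
  rw [RelEmbedding.wellFounded_iff_isEmpty]
  refine ⟨fun f => ?_⟩
  obtain ⟨a, b, hab, hle⟩ := wellQuasiOrdered_le (α := Mon n) f
  exact (lin.lt_iff_le_not_ge _ _).mp (f.map_rel_iff.mpr hab) |>.2 (hlin.le_of_le hle)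

theorem lexLt_iff_toLex_lt {σ : Equiv.Perm (Fin n)} {u v : Mon n} :
    lexLt σ u v ↔ toLex (⇑u ∘ σ) < toLex (⇑v ∘ σ) :=
  exists_congr fun _ => and_comm

theorem IsLexOrder.le_iff {σ : Equiv.Perm (Fin n)} (h : IsLexOrder σ lin) {u v : Mon n} :
    lin.le u v ↔ toLex (⇑u ∘ σ) ≤ toLex (⇑v ∘ σ) := by
  rw [← @not_lt _ lin, h, lexLt_iff_toLex_lt]
  exact not_lt

theorem IsLexOrder.isTermOrder {σ : Equiv.Perm (Fin n)} (h : IsLexOrder σ lin) :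
    IsTermOrder lin := by
  refine ⟨fun u => h.le_iff.mpr (Pi.toLex_monotone fun i => Nat.zero_le _), fun u v w huv => ?_⟩
  simpa [h.le_iff, Finsupp.coe_add, Pi.add_comp, toLex_add] using h.le_iff.mp huv

end TermOrder

section Dominated

variable {n : ℕ} {R : Type*} [CommSemiring R] {lin : LinearOrder (Mon n)}

theorem IsLeadMon.unique {f : MvPolynomial (Fin n) R} {m m' : Mon n}
    (h : IsLeadMon lin f m) (h' : IsLeadMon lin f m') : m = m' :=
  lin.le_antisymm _ _ (h'.2 m h.1) (h.2 m' h'.1)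

theorem exists_isLeadMon (lin : LinearOrder (Mon n)) {f : MvPolynomial (Fin n) R}
    (hf : f ≠ 0) : ∃ m, IsLeadMon lin f m :=
  let ⟨m, hm, hmax⟩ := @Finset.exists_max_image _ _ lin f.support id (support_nonempty.mpr hf)
  ⟨m, hm, hmax⟩

def IsDominatedBy (h : MvPolynomial (Fin n) R) (m : Mon n) : Prop :=
  m ∈ h.support ∧ ∀ v ∈ h.support, v ≤ m

theorem IsDominatedBy.isLeadMon (hlin : IsTermOrder lin) {h : MvPolynomial (Fin n) R}
    {m : Mon n} (hm : IsDominatedBy h m) : IsLeadMon lin h m :=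
  ⟨hm.1, fun v hv => hlin.le_of_le (hm.2 v hv)⟩

theorem IsDominatedBy.monomial_mul {g : MvPolynomial (Fin n) R} {w : Mon n}
    (hw : coeff w g = 1) (hg : ∀ v ∈ g.support, v ≤ w) (u : Mon n) {c : R} (hc : c ≠ 0) :
    IsDominatedBy (monomial u c * g) (u + w) ∧ coeff (u + w) (monomial u c * g) = c := by
  have hcoeff : coeff (u + w) (monomial u c * g) = c := by
    rw [coeff_monomial_mul', if_pos le_self_add, add_tsub_cancel_left, hw, mul_one]
  refine ⟨⟨mem_support_iff.mpr (by rwa [hcoeff]), fun v hv => ?_⟩, hcoeff⟩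
  rw [mem_support_iff, coeff_monomial_mul'] at hv
  split_ifs at hv with huv
  · have := hg _ (mem_support_iff.mpr (right_ne_zero_of_mul hv))
    calc v = u + (v - u) := (add_tsub_cancel_of_le huv).symm
      _ ≤ u + w := add_le_add_right this u
  · exact absurd rfl hv

theorem exists_isLeadMon_sum (hlin : IsTermOrder lin) {T : Finset (Mon n)} (hT : T.Nonempty)
    {h : Mon n → MvPolynomial (Fin n) R} (hh : ∀ m ∈ T, IsDominatedBy (h m) m) :
    ∃ M ∈ T, (∀ m ∈ T, lin.le m M) ∧ IsLeadMon lin (∑ m ∈ T, h m) M := by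
  classical
  obtain ⟨M, hMT, hMmax⟩ := @Finset.exists_max_image _ _ lin T id hT
  have hcoeff : coeff M (∑ m ∈ T, h m) = coeff M (h M) := by
    rw [coeff_sum]
    refine Finset.sum_eq_single_of_mem M hMT fun m hm hne => ?_
    by_contra hM
    exact hne (lin.le_antisymm _ _ (hMmax m hm)
      (hlin.le_of_le ((hh m hm).2 M (mem_support_iff.mpr hM))))
  refine ⟨M, hMT, hMmax, mem_support_iff.mpr (hcoeff ▸ mem_support_iff.mp (hh M hMT).1),
    fun v hv => ?_⟩
  obtain ⟨m, hm, hvm⟩ := Finset.mem_biUnion.mp (support_sum hv)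
  exact lin.le_trans _ _ _ (hlin.le_of_le ((hh m hm).2 v hvm)) (hMmax m hm)

end Dominated

section Groebner

variable {n : ℕ} {R : Type*} {lin : LinearOrder (Mon n)}

theorem IsGroebner.exists_isDominatedBy [CommSemiring R] [Nontrivial R]
    {G : Finset (MvPolynomial (Fin n) R)} {I : Ideal (MvPolynomial (Fin n) R)}
    (hlin : IsTermOrder lin)
    (hG : ∀ g ∈ G, IsDegDominated g) (hGB : IsGroebner lin G I)
    {f : MvPolynomial (Fin n) R} (hf : f ∈ I) {m : Mon n} (hm : IsLeadMon lin f m) :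
    ∃ q ∈ I, IsDominatedBy q m ∧ coeff m q = coeff m f := by
  have hf0 : f ≠ 0 := by rintro rfl; simpa using hm.1
  obtain ⟨g, hgG, mg, hmg, hmgm⟩ := hGB.2 f hf hf0 m hm
  obtain ⟨w, hw, hgw⟩ := hG g hgG
  have hwm : w ≤ m := by
    have hg : IsDominatedBy g w := ⟨mem_support_iff.mpr (by simp [hw]), hgw⟩
    rwa [(hg.isLeadMon hlin).unique hmg]
  obtain ⟨hq, hqm⟩ := IsDominatedBy.monomial_mul hw hgw (m - w) (mem_support_iff.mp hm.1)
  rw [tsub_add_cancel_of_le hwm] at hq hqm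
  exact ⟨_, I.mul_mem_left _ (hGB.1 g hgG), hq, hqm⟩

theorem IsGroebner.exists_sum_isDominatedBy [CommRing R] [Nontrivial R]
    {G : Finset (MvPolynomial (Fin n) R)} {I : Ideal (MvPolynomial (Fin n) R)}
    (hlin : IsTermOrder lin)
    (hG : ∀ g ∈ G, IsDegDominated g) (hGB : IsGroebner lin G I)
    {f : MvPolynomial (Fin n) R} (hf : f ∈ I) :
    ∃ (T : Finset (Mon n)) (h : Mon n → MvPolynomial (Fin n) R),
      (∀ m ∈ T, h m ∈ I ∧ IsDominatedBy (h m) m) ∧ f = ∑ m ∈ T, h m := by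
  classical
  rcases eq_or_ne f 0 with rfl | hf0
  · exact ⟨∅, 0, by simp, by simp⟩
  obtain ⟨m, hm⟩ := exists_isLeadMon lin hf0
  induction m using hlin.wellFounded.induction generalizing f with
  | _ m ih =>
  obtain ⟨q, hqI, hq, hqm⟩ := hGB.exists_isDominatedBy hlin hG hf hm
  have hrest : ∀ v ∈ (f - q).support, lin.lt v m := by
    intro v hv
    have hvm : v ≠ m := by
      rintro rfl
      simp [coeff_sub, hqm] at hv
    have hle : lin.le v m := by
      rcases Finset.mem_union.mp (support_sub _ f q hv) with hvf | hvq
      · exact hm.2 v hvf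
      · exact (hq.isLeadMon hlin).2 v hvq
    exact @lt_of_le_of_ne _ lin.toPartialOrder _ _ hle hvm
  rcases eq_or_ne (f - q) 0 with h0 | h0
  · exact ⟨{m}, fun _ => q, by simpa using ⟨hqI, hq⟩, by simpa [sub_eq_zero] using h0⟩
  obtain ⟨m₁, hm₁⟩ := exists_isLeadMon lin h0
  obtain ⟨T, h, hT, hsum⟩ := ih m₁ (hrest m₁ hm₁.1) (I.sub_mem hf hqI) h0 hm₁
  have hmT : m ∉ T := by
    intro hmT
    obtain ⟨M, -, hMmax, hM⟩ := exists_isLeadMon_sum hlin ⟨m, hmT⟩ fun m hm => (hT m hm).2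
    rw [← hsum] at hM
    exact (lin.lt_iff_le_not_ge _ _).mp (hrest M hM.1) |>.2 (hMmax m hmT)
  refine ⟨insert m T, Function.update h m q, fun m' hm' => ?_, ?_⟩
  · rcases Finset.mem_insert.mp hm' with rfl | hm'
    · simpa using ⟨hqI, hq⟩
    · rw [Function.update_of_ne (ne_of_mem_of_not_mem hm' hmT)]
      exact hT m' hm'
  · rw [Finset.sum_insert hmT, Function.update_self,
      Finset.sum_congr rfl fun m' hm' => Function.update_of_ne (ne_of_mem_of_not_mem hm' hmT) _ _,
      ← hsum, add_sub_cancel]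

theorem IsGroebner.stdMon_eq [CommRing R] [Nontrivial R]
    {G : Finset (MvPolynomial (Fin n) R)} {I : Ideal (MvPolynomial (Fin n) R)}
    (hlin : IsTermOrder lin)
    (hG : ∀ g ∈ G, IsDegDominated g) (hGB : IsGroebner lin G I)
    {lin' : LinearOrder (Mon n)} (hlin' : IsTermOrder lin') :
    stdMon lin' I = {m | ∃ h ∈ I, IsDominatedBy h m}ᶜ := by
  ext m
  simp only [stdMon, Set.mem_compl_iff, Set.mem_ofPred_eq, not_iff_not]
  constructor
  · rintro ⟨f, hf, hf0, hm⟩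
    obtain ⟨T, h, hT, rfl⟩ := hGB.exists_sum_isDominatedBy hlin hG hf
    have hTne : T.Nonempty := Finset.nonempty_iff_ne_empty.mpr (by rintro rfl; simp at hf0)
    obtain ⟨M, hMT, -, hM⟩ := exists_isLeadMon_sum hlin' hTne fun m hm => (hT m hm).2
    rw [hm.unique hM]
    exact ⟨h M, (hT M hMT).1, (hT M hMT).2⟩
  · rintro ⟨h, hI, hm⟩
    exact ⟨h, hI, by rintro rfl; simpa using hm.1, hm.isLeadMon hlin'⟩

end Groebner

/-- If for a single term order `≺` the vanishing ideal `I(𝒱) ⊴ ℝ[x]` of a finite point set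
`𝒱 ⊆ {0,…,k-1}^n` has a Gröbner basis consisting of degree dominated polynomials, then
`𝒱` is extremal. -/
theorem extremal_of_degDominated_groebner_single_order {n k : ℕ}
    (V : Finset (Fin n → Fin k))
    (lin : LinearOrder (Mon n)) (hlin : IsTermOrder lin)
    (G : Finset (MvPolynomial (Fin n) ℝ))
    (hG : ∀ g ∈ G, IsDegDominated g)
    (hGB : IsGroebner lin G
      (vanishIdeal ((V.image (toField ℝ) : Finset (Fin n → ℝ)) : Set (Fin n → ℝ)))) :
    IsExtremal ((V.image (toField ℝ) : Finset (Fin n → ℝ)) : Set (Fin n → ℝ)) := by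
  intro σ₁ σ₂ lin₁ lin₂ h₁ h₂
  rw [hGB.stdMon_eq hlin hG h₁.isTermOrder, hGB.stdMon_eq hlin hG h₂.isTermOrder]
end
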